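/- Let H be a bialgebra over a commutative ring R and π an n×n matrix with entries in H satisfying Δ(π_{ij}) = Σ_k π_{ik} ⊗ π_{kj} and ε(π_{ij}) = δ_{ij}, invertible as a matrix over H. Define Δ_R : H^n → (H ⊗ H)^n by (Δ_R v)_j = Σ_i Δ(b_i) · (π_{ij} ⊗ 1), where b_i = Σ_k v_k (π⁻¹)_{ki}. Then Δ_R is a right H-comodule structure on H^n: (id ⊗ ε) ∘ Δ_R = id (identifying H ⊗ R ≅ H componentwise) and (Δ_R ⊗ id_H) ∘ Δ_R = (id ⊗ Δ) ∘ Δ_R as maps H^n → (H ⊗ H ⊗ H)^n. -/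

import Mathlib

/-!
In the coordinates `b = v π⁻¹` the coaction reads `(Δ_R v)_j = Σ_i Δ(b_i) (π_{ij} ⊗ 1)`.
Right multiplication by an element `c ⊗ 1` commutes with `id ⊗ ε`, `id ⊗ Δ` and the
associator, and `Δ_R v · (π⁻¹ ⊗ 1)` recovers `Δ(b)`. So the counit law reduces to
`(id ⊗ ε) Δ = id` together with `π⁻¹ π = 1`, and coassociativity reduces to
`(id ⊗ Δ) Δ = (Δ ⊗ id) Δ` together with `π π⁻¹ = 1`.
-/

open TensorProduct
open scoped Matrix

/-- The building block of the right coaction on one-forms: the linear map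
`H →ₗ H ⊗ H` sending `x` to `Δ(x · π'_{ki}) · (π_{ij} ⊗ 1)`. -/
noncomputable def Amap (R H : Type*) [CommRing R] [Ring H] [Bialgebra R H] {n : ℕ}
    (π π' : Matrix (Fin n) (Fin n) H) (j i k : Fin n) : H →ₗ[R] H ⊗[R] H :=
  (LinearMap.mulRight R ((π i j) ⊗ₜ[R] (1 : H))) ∘ₗ
    Coalgebra.comul ∘ₗ (LinearMap.mulRight R (π' k i))

/-- The right coaction `Δ_R` on the one-forms `H^n`:
`(Δ_R v)_j = Σ_i Δ(b_i) · (π_{ij} ⊗ 1)` where `b_i = Σ_k v_k (π⁻¹)_{ki}`. -/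
noncomputable def deltaR (R H : Type*) [CommRing R] [Ring H] [Bialgebra R H] {n : ℕ}
    (π π' : Matrix (Fin n) (Fin n) H) (v : Fin n → H) : Fin n → H ⊗[R] H :=
  fun j => ∑ i, ∑ k, Amap R H π π' j i k (v k)

section
variable {R A B C : Type*} [CommSemiring R] [Semiring A] [Algebra R A] [Semiring B] [Algebra R B]
  [Semiring C] [Algebra R C]

theorem LinearMap.rTensor_mulRight_apply (a : A) (x : A ⊗[R] B) :
    (LinearMap.mulRight R a).rTensor B x = x * (a ⊗ₜ 1) := by
  induction x using TensorProduct.induction_on with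
  | zero => simp
  | tmul a' b => simp [Algebra.TensorProduct.tmul_mul_tmul]
  | add x y hx hy => simp [add_mul, hx, hy]

theorem LinearMap.lTensor_mul_tmul_one (f : B →ₗ[R] C) (a : A) (x : A ⊗[R] B) :
    f.lTensor A (x * (a ⊗ₜ 1)) = f.lTensor A x * (a ⊗ₜ 1) := by
  induction x using TensorProduct.induction_on with
  | zero => simp
  | tmul a' b => simp [Algebra.TensorProduct.tmul_mul_tmul]
  | add x y hx hy => simp [add_mul, hx, hy]

theorem TensorProduct.assoc_symm_mul_tmul_one (a : A) (x : A ⊗[R] (B ⊗[R] C)) :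
    (TensorProduct.assoc R A B C).symm (x * (a ⊗ₜ 1)) =
      (TensorProduct.assoc R A B C).symm x * ((a ⊗ₜ 1) ⊗ₜ 1) :=
  map_mul (Algebra.TensorProduct.assoc R R R A B C).symm x (a ⊗ₜ 1)

end

section
variable {R H : Type*} [CommSemiring R] [Semiring H] [Algebra R H] [Coalgebra R H]

theorem rid_lTensor_counit_comul_mul_tmul_one (b c : H) :
    TensorProduct.rid R H ((Coalgebra.counit (R := R)).lTensor H
      (Coalgebra.comul b * (c ⊗ₜ 1))) = b * c := by
  rw [LinearMap.lTensor_mul_tmul_one, Coalgebra.lTensor_counit_comul,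
    Algebra.TensorProduct.tmul_mul_tmul, one_mul, TensorProduct.rid_tmul, one_smul]

theorem rTensor_mulRight_comp_comul_comul (b c : H) :
    (LinearMap.mulRight R (c ⊗ₜ[R] (1 : H)) ∘ₗ Coalgebra.comul).rTensor H (Coalgebra.comul b) =
      (TensorProduct.assoc R H H H).symm ((Coalgebra.comul (R := R)).lTensor H
        (Coalgebra.comul b * (c ⊗ₜ 1))) := by
  rw [LinearMap.lTensor_mul_tmul_one, TensorProduct.assoc_symm_mul_tmul_one,
    Coalgebra.coassoc_symm_apply, LinearMap.rTensor_comp, LinearMap.comp_apply,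
    LinearMap.rTensor_mulRight_apply]

end

section
variable {R H : Type*} [CommRing R] [Ring H] [Bialgebra R H] {n : ℕ}
  {π π' : Matrix (Fin n) (Fin n) H}

theorem deltaR_apply (v : Fin n → H) (j : Fin n) :
    deltaR R H π π' v j = ∑ i, Coalgebra.comul ((v ᵥ* π') i) * (π i j ⊗ₜ 1) := by
  simp only [deltaR, Amap, LinearMap.comp_apply, LinearMap.mulRight_apply, ← Finset.sum_mul,
    ← map_sum, Matrix.vecMul, dotProduct]

theorem sum_deltaR_mul_tmul_one (hππ' : π * π' = 1) (v : Fin n → H) (i : Fin n) :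
    ∑ k, deltaR R H π π' v k * (π' k i ⊗ₜ 1) = Coalgebra.comul ((v ᵥ* π') i) := by
  simp_rw [deltaR_apply, Finset.sum_mul, mul_assoc, Algebra.TensorProduct.tmul_mul_tmul, one_mul]
  rw [Finset.sum_comm]
  simp_rw [← Finset.mul_sum, ← TensorProduct.sum_tmul, ← Matrix.mul_apply, hππ', Matrix.one_apply,
    ite_tmul, mul_ite, mul_zero, Finset.sum_ite_eq', Finset.mem_univ, if_true,
    ← Algebra.TensorProduct.one_def, mul_one]

theorem rTensor_Amap_apply (j i k : Fin n) (y : H ⊗[R] H) :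
    (Amap R H π π' j i k).rTensor H y =
      (LinearMap.mulRight R (π i j ⊗ₜ[R] (1 : H)) ∘ₗ Coalgebra.comul).rTensor H
        (y * (π' k i ⊗ₜ 1)) := by
  rw [Amap, ← LinearMap.comp_assoc, LinearMap.rTensor_comp, LinearMap.comp_apply,
    LinearMap.rTensor_mulRight_apply]

theorem rid_lTensor_counit_deltaR (hπ'π : π' * π = 1) (v : Fin n → H) (j : Fin n) :
    TensorProduct.rid R H ((Coalgebra.counit (R := R)).lTensor H (deltaR R H π π' v j)) = v j := by
  simp_rw [deltaR_apply, map_sum, rid_lTensor_counit_comul_mul_tmul_one]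
  change (v ᵥ* π' ᵥ* π) j = v j
  rw [Matrix.vecMul_vecMul, hπ'π, Matrix.vecMul_one]

theorem sum_rTensor_Amap_deltaR (hππ' : π * π' = 1) (v : Fin n → H) (j : Fin n) :
    ∑ i, ∑ k, (Amap R H π π' j i k).rTensor H (deltaR R H π π' v k) =
      (TensorProduct.assoc R H H H).symm
        ((Coalgebra.comul (R := R)).lTensor H (deltaR R H π π' v j)) := by
  simp_rw [rTensor_Amap_apply, ← map_sum, sum_deltaR_mul_tmul_one hππ',
    rTensor_mulRight_comp_comul_comul, deltaR_apply, map_sum]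

end

theorem deltaR_comodule_general (R H : Type*) [CommRing R] [Ring H] [Bialgebra R H] {n : ℕ}
    (π π' : Matrix (Fin n) (Fin n) H)
    (hππ' : π * π' = 1) (hπ'π : π' * π = 1) :
    (∀ (v : Fin n → H) (j : Fin n),
      (TensorProduct.rid R H)
        ((LinearMap.lTensor H (Coalgebra.counit (R := R) (A := H)))
          (deltaR R H π π' v j)) = v j) ∧
    (∀ (v : Fin n → H) (j : Fin n),
      ∑ i, ∑ k, (LinearMap.rTensor H (Amap R H π π' j i k)) (deltaR R H π π' v k) =
        (TensorProduct.assoc R H H H).symm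
          ((LinearMap.lTensor H (Coalgebra.comul (R := R) (A := H)))
            (deltaR R H π π' v j))) :=
  ⟨rid_lTensor_counit_deltaR hπ'π, sum_rTensor_Amap_deltaR hππ'⟩

/-- `Δ_R` is a right `H`-comodule structure on `H^n`:
`(id ⊗ ε) ∘ Δ_R = id` (identifying `H ⊗ R ≅ H` componentwise) and
`(Δ_R ⊗ id) ∘ Δ_R = (id ⊗ Δ) ∘ Δ_R` (componentwise in `(H ⊗ H ⊗ H)^n`). -/
theorem deltaR_comodule (R H : Type*) [CommRing R] [Ring H] [Bialgebra R H] {n : ℕ}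
    (π π' : Matrix (Fin n) (Fin n) H)
    (hπ : ∀ a b, Coalgebra.comul (R := R) (π a b) = ∑ c, π a c ⊗ₜ[R] π c b)
    (hε : ∀ a b, Coalgebra.counit (R := R) (π a b) = if a = b then (1 : R) else 0)
    (hππ' : π * π' = 1) (hπ'π : π' * π = 1) :
    (∀ (v : Fin n → H) (j : Fin n),
      (TensorProduct.rid R H)
        ((LinearMap.lTensor H (Coalgebra.counit (R := R) (A := H)))
          (deltaR R H π π' v j)) = v j) ∧
    (∀ (v : Fin n → H) (j : Fin n),
      ∑ i, ∑ k, (LinearMap.rTensor H (Amap R H π π' j i k)) (deltaR R H π π' v k) =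
        (TensorProduct.assoc R H H H).symm
          ((LinearMap.lTensor H (Coalgebra.comul (R := R) (A := H)))
            (deltaR R H π π' v j))) :=
  deltaR_comodule_general R H π π' hππ' hπ'π
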